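/- arXiv:2103.00757 — 9 statements merged into one kernel-verified Lean document; each statement's English description precedes it below -/
import Mathlib

section
/- Let s ≥ 1, N ≥ 3, and let b, c ∈ ℝ^s and Aᴸ, Aᴰ, Aᵁ ∈ ℝ^{s×s} satisfy the internal consistency condition Aᴸ𝟙 = Aᴰ𝟙 = Aᵁ𝟙 = c. Consider the N-partition IMIM-GARK method of special structure built from these blocks. Then for each p ∈ {1,2,3}, the GARK order conditions up to order p hold for this method if and only if each of the three Runge–Kutta methods (Aᴸ,b), (Aᴰ,b), (Aᵁ,b) satisfies the classical Runge–Kutta order conditions up to order p; explicitly, the GARK conditions up to order 3 hold if and only if bᵀ𝟙 = 1, bᵀc = 1/2, bᵀ(c∘c) = 1/3, and bᵀAˣc = 1/6 for each X ∈ {L,D,U}, where ∘ denotes the entrywise (Hadamard) product. -/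
open Matrix

/-- The classical Runge--Kutta order conditions up to order `p` (meaningful for `p ≤ 4`),
for a method with coefficient matrix `X`, weights `b` and abscissae `c`. -/
def RKOrderConditions {s : ℕ} (p : ℕ) (X : Matrix (Fin s) (Fin s) ℝ)
    (b c : Fin s → ℝ) : Prop :=
  (1 ≤ p → b ⬝ᵥ (1 : Fin s → ℝ) = 1) ∧
  (2 ≤ p → b ⬝ᵥ c = 1 / 2) ∧
  (3 ≤ p → b ⬝ᵥ (c * c) = 1 / 3 ∧ b ⬝ᵥ X.mulVec c = 1 / 6) ∧
  (4 ≤ p → b ⬝ᵥ (c * c * c) = 1 / 4 ∧ (b * c) ⬝ᵥ X.mulVec c = 1 / 8 ∧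
    b ⬝ᵥ X.mulVec (c * c) = 1 / 12 ∧ b ⬝ᵥ X.mulVec (X.mulVec c) = 1 / 24)

/-- The GARK order conditions up to order `p` (meaningful for `p ≤ 4`), where all
partitions have `s` stages, with blocks `A q m`, weights `b q`, and abscissae
`c q m = (A q m) 𝟙`. -/
def GARKOrderConditions {s N : ℕ} (p : ℕ)
    (A : Fin N → Fin N → Matrix (Fin s) (Fin s) ℝ)
    (b : Fin N → Fin s → ℝ) : Prop :=
  let c : Fin N → Fin N → Fin s → ℝ := fun q m => (A q m).mulVec 1
  (1 ≤ p → ∀ σ, b σ ⬝ᵥ (1 : Fin s → ℝ) = 1) ∧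
  (2 ≤ p → ∀ σ ν, b σ ⬝ᵥ c σ ν = 1 / 2) ∧
  (3 ≤ p → (∀ σ ν μ, b σ ⬝ᵥ (c σ ν * c σ μ) = 1 / 3) ∧
           (∀ σ ν μ, b σ ⬝ᵥ (A σ ν).mulVec (c ν μ) = 1 / 6)) ∧
  (4 ≤ p → (∀ lam σ ν μ, b σ ⬝ᵥ (c σ lam * c σ μ * c σ ν) = 1 / 4) ∧
           (∀ lam σ ν μ, (b σ * c σ μ) ⬝ᵥ (A σ ν).mulVec (c ν lam) = 1 / 8) ∧
           (∀ lam σ ν μ, b σ ⬝ᵥ (A σ lam).mulVec (c lam μ * c lam ν) = 1 / 12) ∧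
           (∀ lam σ ν μ, b σ ⬝ᵥ (A σ lam).mulVec ((A lam ν).mulVec (c ν μ)) = 1 / 24))

/-- The blocks of the `N`-partition IMIM-GARK method of special structure built from
`Aᴸ` (below the diagonal), `Aᴰ` (on the diagonal) and `Aᵁ` (above the diagonal). -/
def IMIMBlocks {s : ℕ} (N : ℕ) (AL AD AU : Matrix (Fin s) (Fin s) ℝ) :
    Fin N → Fin N → Matrix (Fin s) (Fin s) ℝ :=
  fun q m => if (m : ℕ) < (q : ℕ) then AL else if m = q then AD else AU

/-- For `p ∈ {1,2,3}`, the internally consistent special-structure IMIM-GARK method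
satisfies the GARK order conditions up to order `p` iff each of the component
Runge--Kutta methods `(Aᴸ,b)`, `(Aᴰ,b)`, `(Aᵁ,b)` satisfies the classical
Runge--Kutta order conditions up to order `p`. -/
theorem imim_gark_order_le_three {s N : ℕ} (hs : 1 ≤ s) (hN : 3 ≤ N)
    (b c : Fin s → ℝ) (AL AD AU : Matrix (Fin s) (Fin s) ℝ)
    (hL : AL.mulVec 1 = c) (hD : AD.mulVec 1 = c) (hU : AU.mulVec 1 = c) :
    ∀ p ∈ ({1, 2, 3} : Set ℕ),
      (GARKOrderConditions p (IMIMBlocks N AL AD AU) (fun _ => b) ↔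
        ∀ X ∈ ({AL, AD, AU} : Set (Matrix (Fin s) (Fin s) ℝ)),
          RKOrderConditions p X b c) := by

  intro p hp
  simp only [Set.mem_insert_iff, Set.mem_singleton_iff] at hp
  have hp3 : p ≤ 3 := by rcases hp with h|h|h <;> omega
  have hblock : ∀ q m : Fin N, IMIMBlocks N AL AD AU q m = AL ∨
      IMIMBlocks N AL AD AU q m = AD ∨ IMIMBlocks N AL AD AU q m = AU := by
    intro q m
    simp only [IMIMBlocks]
    split_ifs <;> tauto
  have habs : ∀ q m : Fin N, (IMIMBlocks N AL AD AU q m).mulVec 1 = c := by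
    intro q m
    rcases hblock q m with h|h|h <;> rw [h] <;> assumption
  have eL : IMIMBlocks N AL AD AU (⟨1, by omega⟩ : Fin N) (⟨0, by omega⟩ : Fin N) = AL := by
    simp [IMIMBlocks]
  have eD : IMIMBlocks N AL AD AU (⟨1, by omega⟩ : Fin N) (⟨1, by omega⟩ : Fin N) = AD := by
    simp [IMIMBlocks]
  have eU : IMIMBlocks N AL AD AU (⟨1, by omega⟩ : Fin N) (⟨2, by omega⟩ : Fin N) = AU := by
    simp [IMIMBlocks, Fin.ext_iff]
  constructor
  · intro hG X hX
    obtain ⟨h1, h2, h3, _⟩ := hG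
    obtain ⟨q, m, hqm⟩ : ∃ q m : Fin N, IMIMBlocks N AL AD AU q m = X := by
      simp only [Set.mem_insert_iff, Set.mem_singleton_iff] at hX
      rcases hX with rfl|rfl|rfl
      exacts [⟨_, _, eL⟩, ⟨_, _, eD⟩, ⟨_, _, eU⟩]
    refine ⟨fun h => h1 h ⟨0, by omega⟩, fun h => ?_, fun h => ⟨?_, ?_⟩, fun h => by omega⟩
    · have := h2 h q m
      simpa only [habs q m] using this
    · have := (h3 h).1 q m m
      simpa only [habs q m] using this
    · have := (h3 h).2 q m m
      simpa only [habs m m, hqm] using this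
  · intro hRK
    have hRL := hRK AL (by simp)
    have hRD := hRK AD (by simp)
    have hRU := hRK AU (by simp)
    have hX : ∀ q m : Fin N, RKOrderConditions p (IMIMBlocks N AL AD AU q m) b c := by
      intro q m
      rcases hblock q m with h|h|h <;> rw [h] <;> assumption
    refine ⟨fun h σ => hRL.1 h, fun h σ ν => ?_, fun h => ⟨fun σ ν μ => ?_, fun σ ν μ => ?_⟩,
      fun h => by omega⟩
    · simpa only [habs σ ν] using hRL.2.1 h
    · simpa only [habs σ ν, habs σ μ] using (hRL.2.2.1 h).1
    · simpa only [habs ν μ] using ((hX σ ν).2.2.1 h).2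
end

section
/- Let s ≥ 1, N ≥ 3, and let b, c ∈ ℝ^s and Aᴸ, Aᴰ, Aᵁ ∈ ℝ^{s×s} satisfy Aᴸ𝟙 = Aᴰ𝟙 = Aᵁ𝟙 = c. The N-partition IMIM-GARK method of special structure built from these blocks satisfies the GARK order conditions up to order 4 if and only if (i) each of the Runge–Kutta methods (Aᴸ,b), (Aᴰ,b), (Aᵁ,b) satisfies the classical Runge–Kutta order conditions up to order 4, i.e. bᵀ𝟙 = 1, bᵀc = 1/2, bᵀ(c∘c) = 1/3, bᵀAˣc = 1/6, bᵀ(c∘c∘c) = 1/4, (b∘c)ᵀAˣc = 1/8, bᵀAˣ(c∘c) = 1/12, bᵀAˣAˣc = 1/24 for each X ∈ {L,D,U}, and (ii) the six coupling conditions bᵀAˣAʸc = 1/24 hold for every ordered pair of distinct X, Y ∈ {L,D,U}. -/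
open Matrix

/-- The internally consistent special-structure IMIM-GARK method satisfies the GARK order
conditions up to order 4 iff (i) each component Runge--Kutta method `(Aᴸ,b)`, `(Aᴰ,b)`,
`(Aᵁ,b)` satisfies the classical order conditions up to order 4 and (ii) the six
coupling conditions `bᵀ Aˣ Aʸ c = 1/24` hold for all ordered pairs of distinct
`X, Y ∈ {L, D, U}`. -/
theorem imim_gark_order_four {s N : ℕ} (hs : 1 ≤ s) (hN : 3 ≤ N)
    (b c : Fin s → ℝ) (AL AD AU : Matrix (Fin s) (Fin s) ℝ)
    (hL : AL.mulVec 1 = c) (hD : AD.mulVec 1 = c) (hU : AU.mulVec 1 = c) :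
    GARKOrderConditions 4 (IMIMBlocks N AL AD AU) (fun _ => b) ↔
      ((∀ X ∈ ({AL, AD, AU} : Set (Matrix (Fin s) (Fin s) ℝ)),
          RKOrderConditions 4 X b c) ∧
        (b ⬝ᵥ AD.mulVec (AU.mulVec c) = 1 / 24 ∧
         b ⬝ᵥ AU.mulVec (AD.mulVec c) = 1 / 24 ∧
         b ⬝ᵥ AL.mulVec (AU.mulVec c) = 1 / 24 ∧
         b ⬝ᵥ AU.mulVec (AL.mulVec c) = 1 / 24 ∧
         b ⬝ᵥ AD.mulVec (AL.mulVec c) = 1 / 24 ∧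
         b ⬝ᵥ AL.mulVec (AD.mulVec c) = 1 / 24)) := by
  have hmem : ∀ q m : Fin N, IMIMBlocks N AL AD AU q m = AL ∨
      IMIMBlocks N AL AD AU q m = AD ∨ IMIMBlocks N AL AD AU q m = AU := by
    intro q m
    simp only [IMIMBlocks]
    split_ifs <;> tauto
  have hc : ∀ q m : Fin N, (IMIMBlocks N AL AD AU q m).mulVec 1 = c := by
    intro q m
    rcases hmem q m with h | h | h <;> rw [h] <;> assumption
  have eL : ∀ (a b' : ℕ) (ha : a < N) (hb : b' < N), b' < a →
      IMIMBlocks N AL AD AU ⟨a, ha⟩ ⟨b', hb⟩ = AL := by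
    intro a b' ha hb hba
    simp [IMIMBlocks, hba]
  have eD : ∀ (a : ℕ) (ha : a < N),
      IMIMBlocks N AL AD AU ⟨a, ha⟩ ⟨a, ha⟩ = AD := by
    intro a ha
    simp [IMIMBlocks]
  have eU : ∀ (a b' : ℕ) (ha : a < N) (hb : b' < N), a < b' →
      IMIMBlocks N AL AD AU ⟨a, ha⟩ ⟨b', hb⟩ = AU := by
    intro a b' ha hb hab
    have h1 : ¬ b' < a := by omega
    have h2 : (⟨b', hb⟩ : Fin N) ≠ ⟨a, ha⟩ := by
      simp only [ne_eq, Fin.mk.injEq]; omega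
    simp [IMIMBlocks, h1, h2]
  have h0 : (0 : ℕ) < N := by omega
  have h1 : (1 : ℕ) < N := by omega
  have h2N : (2 : ℕ) < N := by omega
  constructor
  · intro h
    simp only [GARKOrderConditions] at h
    obtain ⟨g1, g2, g3, g4⟩ := h
    obtain ⟨g31, g32⟩ := g3 (by norm_num)
    obtain ⟨g41, g42, g43, g44⟩ := g4 (by norm_num)
    -- basic facts with c rewritten
    have hb1 : b ⬝ᵥ (1 : Fin s → ℝ) = 1 := g1 (by norm_num) ⟨0, h0⟩
    have hbc : b ⬝ᵥ c = 1 / 2 := by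
      have := g2 (by norm_num) ⟨0, h0⟩ ⟨0, h0⟩
      simp only [hc] at this; exact this
    have hbcc : b ⬝ᵥ (c * c) = 1 / 3 := by
      have := g31 ⟨0, h0⟩ ⟨0, h0⟩ ⟨0, h0⟩
      simp only [hc] at this; exact this
    have hbccc : b ⬝ᵥ (c * c * c) = 1 / 4 := by
      have := g41 ⟨0, h0⟩ ⟨0, h0⟩ ⟨0, h0⟩ ⟨0, h0⟩
      simp only [hc] at this; exact this
    -- single-matrix conditions
    have oneMat : ∀ (σ ν : Fin N), b ⬝ᵥ (IMIMBlocks N AL AD AU σ ν).mulVec c = 1 / 6 := by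
      intro σ ν
      have := g32 σ ν σ
      simp only [hc] at this; exact this
    have twoMat : ∀ (σ ν : Fin N), (b * c) ⬝ᵥ (IMIMBlocks N AL AD AU σ ν).mulVec c = 1 / 8 := by
      intro σ ν
      have := g42 σ σ ν σ
      simp only [hc] at this; exact this
    have threeMat : ∀ (σ lam : Fin N),
        b ⬝ᵥ (IMIMBlocks N AL AD AU σ lam).mulVec (c * c) = 1 / 12 := by
      intro σ lam
      have := g43 lam σ σ σ
      simp only [hc] at this; exact this
    have fourMat : ∀ (σ lam ν : Fin N),
        b ⬝ᵥ (IMIMBlocks N AL AD AU σ lam).mulVec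
          ((IMIMBlocks N AL AD AU lam ν).mulVec c) = 1 / 24 := by
      intro σ lam ν
      have := g44 lam σ ν σ
      simp only [hc] at this; exact this
    -- pair values
    have pLL := fourMat ⟨2, h2N⟩ ⟨1, h1⟩ ⟨0, h0⟩
    rw [eL 2 1 h2N h1 (by omega), eL 1 0 h1 h0 (by omega)] at pLL
    have pLD := fourMat ⟨1, h1⟩ ⟨0, h0⟩ ⟨0, h0⟩
    rw [eL 1 0 h1 h0 (by omega), eD 0 h0] at pLD
    have pLU := fourMat ⟨1, h1⟩ ⟨0, h0⟩ ⟨1, h1⟩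
    rw [eL 1 0 h1 h0 (by omega), eU 0 1 h0 h1 (by omega)] at pLU
    have pDL := fourMat ⟨1, h1⟩ ⟨1, h1⟩ ⟨0, h0⟩
    rw [eD 1 h1, eL 1 0 h1 h0 (by omega)] at pDL
    have pDD := fourMat ⟨0, h0⟩ ⟨0, h0⟩ ⟨0, h0⟩
    rw [eD 0 h0] at pDD
    have pDU := fourMat ⟨0, h0⟩ ⟨0, h0⟩ ⟨1, h1⟩
    rw [eD 0 h0, eU 0 1 h0 h1 (by omega)] at pDU
    have pUL := fourMat ⟨0, h0⟩ ⟨1, h1⟩ ⟨0, h0⟩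
    rw [eU 0 1 h0 h1 (by omega), eL 1 0 h1 h0 (by omega)] at pUL
    have pUD := fourMat ⟨0, h0⟩ ⟨1, h1⟩ ⟨1, h1⟩
    rw [eU 0 1 h0 h1 (by omega), eD 1 h1] at pUD
    have pUU := fourMat ⟨0, h0⟩ ⟨1, h1⟩ ⟨2, h2N⟩
    rw [eU 0 1 h0 h1 (by omega), eU 1 2 h1 h2N (by omega)] at pUU
    refine ⟨?_, pDU, pUD, pLU, pUL, pDL, pLD⟩
    intro X hX
    have sL : ∀ σ ν : Fin N, IMIMBlocks N AL AD AU σ ν = X →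
        (b ⬝ᵥ X.mulVec c = 1 / 6 ∧ (b * c) ⬝ᵥ X.mulVec c = 1 / 8 ∧
          b ⬝ᵥ X.mulVec (c * c) = 1 / 12) := by
      intro σ ν hXe
      refine ⟨?_, ?_, ?_⟩
      · have := oneMat σ ν; rwa [hXe] at this
      · have := twoMat σ ν; rwa [hXe] at this
      · have := threeMat σ ν; rwa [hXe] at this
    simp only [Set.mem_insert_iff, Set.mem_singleton_iff] at hX
    rcases hX with rfl | rfl | rfl
    · obtain ⟨q1, q2, q3⟩ := sL ⟨1, h1⟩ ⟨0, h0⟩ (eL 1 0 h1 h0 (by omega))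
      exact ⟨fun _ => hb1, fun _ => hbc, fun _ => ⟨hbcc, q1⟩,
        fun _ => ⟨hbccc, q2, q3, pLL⟩⟩
    · obtain ⟨q1, q2, q3⟩ := sL ⟨0, h0⟩ ⟨0, h0⟩ (eD 0 h0)
      exact ⟨fun _ => hb1, fun _ => hbc, fun _ => ⟨hbcc, q1⟩,
        fun _ => ⟨hbccc, q2, q3, pDD⟩⟩
    · obtain ⟨q1, q2, q3⟩ := sL ⟨0, h0⟩ ⟨1, h1⟩ (eU 0 1 h0 h1 (by omega))
      exact ⟨fun _ => hb1, fun _ => hbc, fun _ => ⟨hbcc, q1⟩,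
        fun _ => ⟨hbccc, q2, q3, pUU⟩⟩
  · rintro ⟨hRK, pDU, pUD, pLU, pUL, pDL, pLD⟩
    have memL : AL ∈ ({AL, AD, AU} : Set (Matrix (Fin s) (Fin s) ℝ)) := by simp
    have memD : AD ∈ ({AL, AD, AU} : Set (Matrix (Fin s) (Fin s) ℝ)) := by simp
    have memU : AU ∈ ({AL, AD, AU} : Set (Matrix (Fin s) (Fin s) ℝ)) := by simp
    obtain ⟨rL1, rL2, rL3, rL4⟩ := hRK AL memL
    obtain ⟨rD1, rD2, rD3, rD4⟩ := hRK AD memD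
    obtain ⟨rU1, rU2, rU3, rU4⟩ := hRK AU memU
    obtain ⟨rL31, rL32⟩ := rL3 (by norm_num)
    obtain ⟨rL41, rL42, rL43, rL44⟩ := rL4 (by norm_num)
    obtain ⟨rD31, rD32⟩ := rD3 (by norm_num)
    obtain ⟨rD41, rD42, rD43, rD44⟩ := rD4 (by norm_num)
    obtain ⟨rU31, rU32⟩ := rU3 (by norm_num)
    obtain ⟨rU41, rU42, rU43, rU44⟩ := rU4 (by norm_num)
    simp only [GARKOrderConditions]
    refine ⟨fun _ _ => rL1 (by norm_num), fun _ σ ν => ?_,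
      fun _ => ⟨fun σ ν μ => ?_, fun σ ν μ => ?_⟩,
      fun _ => ⟨fun lam σ ν μ => ?_, fun lam σ ν μ => ?_,
        fun lam σ ν μ => ?_, fun lam σ ν μ => ?_⟩⟩
    · rw [hc]; exact rL2 (by norm_num)
    · rw [hc, hc]; exact rL31
    · rw [hc]
      rcases hmem σ ν with h | h | h <;> rw [h] <;> assumption
    · rw [hc, hc, hc]; exact rL41
    · rw [hc, hc]
      rcases hmem σ ν with h | h | h <;> rw [h] <;> assumption
    · rw [hc, hc]
      rcases hmem σ lam with h | h | h <;> rw [h] <;> assumption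
    · rw [hc]
      rcases hmem σ lam with h | h | h <;> rcases hmem lam ν with h' | h' | h' <;>
        rw [h, h'] <;> assumption
end

section
/- Let N ≥ 2 and consider the GARK formulation of Yanenko's LOD-Crank–Nicolson method: two stages per partition, blocks A^{(q,m)} = [[1/2,1/2],[1/2,1/2]] for m < q, A^{(q,q)} = [[0,0],[1/2,1/2]], A^{(q,m)} = 0 for m > q, and weights b^{(q)} = (1/2, 1/2)ᵀ. Then the first-order GARK conditions b^{(σ)ᵀ}𝟙 = 1 hold for all σ, but the second-order GARK conditions fail: for any q > m, b^{(q)ᵀ}c^{(q,m)} = 1 ≠ 1/2 where c^{(q,m)} = A^{(q,m)}𝟙. Hence the method is of order exactly one. -/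
open Matrix

/-- For the GARK formulation of Yanenko's LOD-Crank–Nicolson method (two stages per
partition), the first-order GARK conditions hold, but the second-order conditions fail:
for `q > m` one has `b⁽ᵠ⁾ᵀ c⁽ᵠ'ᵐ⁾ = 1 ≠ 1/2`.  Hence the method has order exactly one. -/
theorem yanenko_lod_cn_order_one (N : ℕ) (hN : 2 ≤ N) :
    let AL : Matrix (Fin 2) (Fin 2) ℝ := !![1/2, 1/2; 1/2, 1/2]
    let AD : Matrix (Fin 2) (Fin 2) ℝ := !![0, 0; 1/2, 1/2]
    let A : Fin N → Fin N → Matrix (Fin 2) (Fin 2) ℝ :=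
      fun q m => if (m : ℕ) < (q : ℕ) then AL else if m = q then AD else 0
    let b : Fin 2 → ℝ := ![1/2, 1/2]
    (∀ σ : Fin N, b ⬝ᵥ (1 : Fin 2 → ℝ) = 1) ∧
    (∀ q m : Fin N, (m : ℕ) < (q : ℕ) →
       b ⬝ᵥ (A q m).mulVec (1 : Fin 2 → ℝ) = 1 ∧ (1 : ℝ) ≠ 1/2) ∧
    ¬ (∀ σ ν : Fin N, b ⬝ᵥ (A σ ν).mulVec (1 : Fin 2 → ℝ) = 1/2) := by
  intro AL AD A b
  refine ⟨fun σ => by simp [b, dotProduct, Fin.sum_univ_two]; norm_num,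
    fun q m hqm => ⟨?_, by norm_num⟩, fun h => ?_⟩
  · simp only [A, if_pos hqm]
    simp [b, AL, dotProduct, mulVec, Fin.sum_univ_two]
    norm_num
  · have h1 := h ⟨1, by omega⟩ ⟨0, by omega⟩
    simp only [A] at h1
    rw [if_pos (by simp)] at h1
    simp [b, AL, dotProduct, mulVec, Fin.sum_univ_two] at h1
    norm_num at h1
end

section
/- Let N ≥ 2 and consider the GARK formulation of the symmetric Yanenko LOD-Crank–Nicolson method: four stages per partition with blocks A^{(q,m)} = Aᴸ (rows all equal to (1/4,1/4,0,0)) for m < q; A^{(q,q)} = Aᴰ with rows (0,0,0,0), (1/4,1/4,0,0), (1/4,1/4,0,0), (1/4,1/4,1/4,1/4); A^{(q,m)} = Aᵁ with rows (0,0,0,0), (0,0,0,0), (1/4,1/4,1/4,1/4), (1/4,1/4,1/4,1/4) for m > q; and b^{(q)} = (1/4,1/4,1/4,1/4)ᵀ. Then the GARK order conditions through order two hold: b^{(σ)ᵀ}𝟙 = 1 and b^{(σ)ᵀ}c^{(σ,ν)} = 1/2 for all σ,ν, where c^{(σ,ν)} = A^{(σ,ν)}𝟙. -/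
open Matrix

/-- The GARK formulation of the symmetric Yanenko LOD-Crank–Nicolson method (four stages
per partition) satisfies the GARK order conditions through order two. -/
theorem symmetric_yanenko_lod_cn_order_two (N : ℕ) (hN : 2 ≤ N) :
    let AL : Matrix (Fin 4) (Fin 4) ℝ :=
      !![1/4, 1/4, 0, 0;
         1/4, 1/4, 0, 0;
         1/4, 1/4, 0, 0;
         1/4, 1/4, 0, 0]
    let AD : Matrix (Fin 4) (Fin 4) ℝ :=
      !![0, 0, 0, 0;
         1/4, 1/4, 0, 0;
         1/4, 1/4, 0, 0;
         1/4, 1/4, 1/4, 1/4]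
    let AU : Matrix (Fin 4) (Fin 4) ℝ :=
      !![0, 0, 0, 0;
         0, 0, 0, 0;
         1/4, 1/4, 1/4, 1/4;
         1/4, 1/4, 1/4, 1/4]
    let A : Fin N → Fin N → Matrix (Fin 4) (Fin 4) ℝ :=
      fun q m => if (m : ℕ) < (q : ℕ) then AL else if m = q then AD else AU
    let b : Fin 4 → ℝ := ![1/4, 1/4, 1/4, 1/4]
    (∀ σ : Fin N, b ⬝ᵥ (1 : Fin 4 → ℝ) = 1) ∧
    (∀ σ ν : Fin N, b ⬝ᵥ (A σ ν).mulVec (1 : Fin 4 → ℝ) = 1/2) := by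
  intro AL AD AU A b
  constructor
  · intro σ
    simp [b, dotProduct, Fin.sum_univ_four]
    norm_num
  · intro σ ν
    have h : ∀ M ∈ [AL, AD, AU], b ⬝ᵥ M.mulVec (1 : Fin 4 → ℝ) = 1/2 := by
      intro M hM
      fin_cases hM <;>
        · simp [b, AL, AD, AU, dotProduct, mulVec, Fin.sum_univ_four, Matrix.vecHead, Matrix.vecTail]
          norm_num
    simp only [A]
    split
    · exact h AL (by simp)
    · split
      · exact h AD (by simp)
      · exact h AU (by simp)
end

section
/- Let N ≥ 2 and consider the GARK formulation of the Trapezoidal Splitting method: two stages per partition with blocks A^{(q,m)} = [[1/2,0],[1/2,0]] for m < q, A^{(q,m)} = [[0,0],[1/2,1/2]] for m ≥ q, and weights b^{(q)} = (1/2,1/2)ᵀ. Then the GARK order conditions through order two hold: b^{(σ)ᵀ}𝟙 = 1 and b^{(σ)ᵀ}c^{(σ,ν)} = 1/2 for all σ,ν, where c^{(σ,ν)} = A^{(σ,ν)}𝟙; moreover the method is not internally consistent, i.e. there exist q and m, m' with c^{(q,m)} ≠ c^{(q,m')}. -/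
open Matrix

theorem Matrix.of_fin_two_mulVec_one {α : Type*} [NonAssocSemiring α] (a b c d : α) :
    !![a, b; c, d] *ᵥ (1 : Fin 2 → α) = ![a + b, c + d] := by
  ext i
  fin_cases i <;> simp [mulVec, dotProduct, Fin.sum_univ_two]

theorem trapezoidal_weights_dotProduct (v : Fin 2 → ℝ) :
    ![1/2, 1/2] ⬝ᵥ v = (v 0 + v 1) / 2 := by
  rw [vec2_dotProduct]
  simp only [cons_val_zero, cons_val_one]
  ring

/-- The GARK formulation of the Trapezoidal Splitting method satisfies the GARK order
conditions through order two, but is not internally consistent. -/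
theorem trapezoidal_splitting_order_two (N : ℕ) (hN : 2 ≤ N) :
    let A : Fin N → Fin N → Matrix (Fin 2) (Fin 2) ℝ :=
      fun q m => if (m : ℕ) < (q : ℕ) then !![1/2, 0; 1/2, 0] else !![0, 0; 1/2, 1/2]
    let b : Fin 2 → ℝ := ![1/2, 1/2]
    (∀ σ : Fin N, b ⬝ᵥ (1 : Fin 2 → ℝ) = 1) ∧
    (∀ σ ν : Fin N, b ⬝ᵥ (A σ ν).mulVec (1 : Fin 2 → ℝ) = 1/2) ∧
    (∃ q m m' : Fin N,
      (A q m).mulVec (1 : Fin 2 → ℝ) ≠ (A q m').mulVec (1 : Fin 2 → ℝ)) := by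
  intro A b
  have abscissae (σ ν : Fin N) :
      A σ ν *ᵥ 1 = if (ν : ℕ) < σ then ![1/2, 1/2] else ![0, 1] := by
    simp only [A]
    split_ifs <;> rw [of_fin_two_mulVec_one] <;> norm_num
  refine ⟨fun _ => ?_, fun σ ν => ?_, ?_⟩
  · rw [trapezoidal_weights_dotProduct]
    norm_num
  · rw [abscissae, trapezoidal_weights_dotProduct]
    split_ifs <;> norm_num
  · refine ⟨⟨1, by omega⟩, ⟨0, by omega⟩, ⟨1, by omega⟩, ?_⟩
    rw [abscissae, abscissae]
    intro h
    simpa using congrFun h 0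
end

section
/- Fix N ≥ 1 and θ ∈ ℝ, and consider the GARK formulation of the Douglas splitting method for an (N+1)-way partitioned system with partitions 0,1,…,N: for q,m ∈ {1,…,N}, A^{(q,m)} = Aᴵ = [[0,0],[1−θ,θ]] for m ≤ q, A^{(q,m)} = Aᴱ = [[0,0],[1,0]] for m > q, b^{(q)} = (1−θ, θ)ᵀ; for the partition 0 (treated explicitly): A^{(0,0)} = [0], A^{(q,0)} = (0,1)ᵀ, A^{(0,q)} = (0,0), b^{(0)} = [1]. Then: (i) for every θ ∈ ℝ the first-order GARK conditions b^{(σ)ᵀ}𝟙 = 1 hold for all σ ∈ {0,1,…,N}; (ii) the second-order conditions b^{(σ)ᵀ}c^{(σ,ν)} = 1/2 restricted to σ,ν ∈ {1,…,N} hold if and only if θ = 1/2; and (iii) for every θ ∈ ℝ the second-order condition b^{(0)ᵀ}c^{(0,ν)} = 1/2 fails (its left side is 0). Hence the method is second order iff θ = 1/2 and the partition f^{(0)} is absent. -/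
open Matrix

/-- GARK order conditions for the Douglas splitting method with parameter `θ`,
for an `(N+1)`-way partitioned system with a nonstiff partition `0` and implicit
partitions `1, …, N`:
(i) the first-order conditions hold for every partition and every `θ`;
(ii) the second-order conditions restricted to the implicit partitions hold iff `θ = 1/2`;
(iii) the second-order condition involving the nonstiff weights `b⁽⁰⁾` fails for every
`θ` (its left-hand side is `0`). -/
theorem douglas_splitting_order_conditions (N : ℕ) (hN : 1 ≤ N) (θ : ℝ) :
    let AI : Matrix (Fin 2) (Fin 2) ℝ := !![0, 0; 1 - θ, θ]
    let AE : Matrix (Fin 2) (Fin 2) ℝ := !![0, 0; 1, 0]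
    let A : Fin N → Fin N → Matrix (Fin 2) (Fin 2) ℝ :=
      fun q m => if (m : ℕ) ≤ (q : ℕ) then AI else AE
    let b : Fin 2 → ℝ := ![1 - θ, θ]
    let A00 : Matrix (Fin 1) (Fin 1) ℝ := !![0]
    let Aq0 : Matrix (Fin 2) (Fin 1) ℝ := !![0; 1]
    let A0q : Matrix (Fin 1) (Fin 2) ℝ := !![0, 0]
    let b0 : Fin 1 → ℝ := ![1]
    -- (i) first-order conditions for all partitions σ ∈ {0, 1, …, N}
    ((b0 ⬝ᵥ (1 : Fin 1 → ℝ) = 1) ∧ (b ⬝ᵥ (1 : Fin 2 → ℝ) = 1)) ∧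
    -- (ii) second-order conditions restricted to σ, ν ∈ {1, …, N}
    ((∀ σ ν : Fin N, b ⬝ᵥ (A σ ν).mulVec (1 : Fin 2 → ℝ) = 1/2) ↔ θ = 1/2) ∧
    -- (iii) the second-order condition for σ = 0 fails for every θ
    (∀ ν : Fin N, b0 ⬝ᵥ A0q.mulVec (1 : Fin 2 → ℝ) = 0 ∧
      b0 ⬝ᵥ A0q.mulVec (1 : Fin 2 → ℝ) ≠ 1/2) := by
  intro AI AE A b A00 Aq0 A0q b0
  refine ⟨⟨by simp [b0, dotProduct], by
    simp [b, dotProduct, Fin.sum_univ_two]⟩, ?_, ?_⟩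
  · constructor
    · intro h
      have := h ⟨0, hN⟩ ⟨0, hN⟩
      simp [A, AI, b, dotProduct, mulVec, Fin.sum_univ_two] at this
      linarith
    · intro hθ σ ν
      subst hθ
      show b ⬝ᵥ ((if (ν : ℕ) ≤ (σ : ℕ) then AI else AE).mulVec 1) = 1/2
      rcases le_or_gt (ν : ℕ) (σ : ℕ) with hc | hc
      · rw [if_pos hc]
        simp [AI, b, dotProduct, mulVec, Fin.sum_univ_two]
      · rw [if_neg (not_le.2 hc)]
        simp [AE, b, dotProduct, mulVec, Fin.sum_univ_two]
  · intro ν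
    constructor <;> simp [b0, A0q, dotProduct, mulVec, Fin.sum_univ_two]
end

section
/- Fix N ≥ 1 and θ, σ, μ ∈ ℝ, and consider the GARK formulation of the Modified Craig–Sneyd scheme: for q,m ∈ {1,…,N}, A^{(q,m)} equals the 4×4 matrix with rows (0,0,0,0), (1−θ,θ,0,0), (1−θ,θ,0,0), (1−μ−θ,0,μ,θ) when m ≤ q, and rows (0,0,0,0), (1,0,0,0), (1−θ,θ,0,0), (1−μ,0,μ,0) when m > q, with b^{(q)} = (1−μ−θ, 0, μ, θ)ᵀ; for partition 0: A^{(0,0)} = [[0,0],[1,0]], A^{(0,q)} = [[0,0,0,0],[1−θ,θ,0,0]], A^{(q,0)} has rows (0,0),(1,0),(1,0),(1−σ−μ, σ+μ), and b^{(0)} = (1−σ−μ, σ+μ)ᵀ. Then the GARK order conditions through order two (b^{(τ)ᵀ}𝟙 = 1 and b^{(τ)ᵀ}c^{(τ,ν)} = 1/2 for all τ,ν ∈ {0,…,N}, with c^{(τ,ν)} = A^{(τ,ν)}𝟙) hold if and only if σ = θ and μ = 1/2 − θ. -/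
open Matrix

/-- The GARK formulation of the Modified Craig–Sneyd scheme (parameters `θ, σ, μ`)
satisfies the GARK order conditions through order two if and only if
`σ = θ` and `μ = 1/2 - θ`. -/
theorem modified_craig_sneyd_order_two (N : ℕ) (hN : 1 ≤ N) (θ σ μ : ℝ) :
    let AI : Matrix (Fin 4) (Fin 4) ℝ :=
      !![0, 0, 0, 0;
         1 - θ, θ, 0, 0;
         1 - θ, θ, 0, 0;
         1 - μ - θ, 0, μ, θ]
    let AE : Matrix (Fin 4) (Fin 4) ℝ :=
      !![0, 0, 0, 0;
         1, 0, 0, 0;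
         1 - θ, θ, 0, 0;
         1 - μ, 0, μ, 0]
    let A : Fin N → Fin N → Matrix (Fin 4) (Fin 4) ℝ :=
      fun q m => if (m : ℕ) ≤ (q : ℕ) then AI else AE
    let b : Fin 4 → ℝ := ![1 - μ - θ, 0, μ, θ]
    let A00 : Matrix (Fin 2) (Fin 2) ℝ := !![0, 0; 1, 0]
    let A0q : Matrix (Fin 2) (Fin 4) ℝ := !![0, 0, 0, 0; 1 - θ, θ, 0, 0]
    let Aq0 : Matrix (Fin 4) (Fin 2) ℝ :=
      !![0, 0; 1, 0; 1, 0; 1 - σ - μ, σ + μ]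
    let b0 : Fin 2 → ℝ := ![1 - σ - μ, σ + μ]
    -- the GARK order conditions through order two, over all partitions τ, ν ∈ {0, …, N}
    (((b0 ⬝ᵥ (1 : Fin 2 → ℝ) = 1) ∧ (b ⬝ᵥ (1 : Fin 4 → ℝ) = 1) ∧
      (∀ τ ν : Fin N, b ⬝ᵥ (A τ ν).mulVec (1 : Fin 4 → ℝ) = 1/2) ∧
      (∀ τ : Fin N, b ⬝ᵥ Aq0.mulVec (1 : Fin 2 → ℝ) = 1/2) ∧
      (∀ ν : Fin N, b0 ⬝ᵥ A0q.mulVec (1 : Fin 4 → ℝ) = 1/2) ∧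
      (b0 ⬝ᵥ A00.mulVec (1 : Fin 2 → ℝ) = 1/2)) ↔ (σ = θ ∧ μ = 1/2 - θ)) := by
  intro AI AE A b A00 A0q Aq0 b0
  constructor
  · rintro ⟨-, -, h3, -, -, h6⟩
    have h := h3 ⟨0, hN⟩ ⟨0, hN⟩
    simp [A, AI, b, A00, b0, dotProduct, Matrix.mulVec, Fin.sum_univ_succ] at h h6
    constructor <;> linarith
  · rintro ⟨rfl, rfl⟩
    refine ⟨?_, ?_, fun τ ν => ?_, fun τ => ?_, fun ν => ?_, ?_⟩
    · simp [b0, dotProduct, Fin.sum_univ_succ] <;> ring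
    · simp [b, dotProduct, Fin.sum_univ_succ] <;> ring
    · show b ⬝ᵥ (if (ν : ℕ) ≤ (τ : ℕ) then AI else AE).mulVec 1 = 1/2
      split_ifs <;>
        simp [AI, AE, b, dotProduct, Matrix.mulVec, Fin.sum_univ_succ] <;> ring
    · simp [Aq0, b, dotProduct, Matrix.mulVec, Fin.sum_univ_succ] <;> ring
    · simp [A0q, b0, dotProduct, Matrix.mulVec, Fin.sum_univ_succ] <;> ring
    · simp [A00, b0, dotProduct, Matrix.mulVec, Fin.sum_univ_succ] <;> ring
end

section
/- Fix N ≥ 1 and θ, μ ∈ ℝ, and consider the GARK formulation of the Hundsdorfer–Verwer scheme: for q,m ∈ {1,…,N}, A^{(q,m)} equals the 4×4 matrix with rows (0,0,0,0), (1−θ,θ,0,0), (1−θ,θ,0,0), (1−μ,0,μ−θ,θ) when m ≤ q, and rows (0,0,0,0), (1,0,0,0), (1−θ,θ,0,0), (1−μ,0,μ,0) when m > q, with b^{(q)} = (1−μ, 0, μ−θ, θ)ᵀ; for partition 0: A^{(0,0)} = [[0,0],[1,0]], A^{(0,q)} = [[0,0,0,0],[1−θ,θ,0,0]], A^{(q,0)}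 has rows (0,0),(1,0),(1,0),(1−μ,μ), and b^{(0)} = (1−μ,μ)ᵀ. Then: (i) the scheme is stiffly accurate, i.e. each b^{(ν)ᵀ} equals the last row of A^{(N,ν)}; and (ii) the GARK order conditions through order two (b^{(τ)ᵀ}𝟙 = 1 and b^{(τ)ᵀ}c^{(τ,ν)} = 1/2 for all τ,ν, with c^{(τ,ν)} = A^{(τ,ν)}𝟙) hold if and only if μ = 1/2. -/
open Matrix

/-- The GARK formulation of the Hundsdorfer–Verwer scheme (parameters `θ, μ`):
(i) it is stiffly accurate (the weights equal the last rows of the blocks in the last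
block row of the tableau), and (ii) it satisfies the GARK order conditions through order
two if and only if `μ = 1/2`. -/
theorem hundsdorfer_verwer_order_two (N : ℕ) (hN : 1 ≤ N) (θ μ : ℝ) :
    let AI : Matrix (Fin 4) (Fin 4) ℝ :=
      !![0, 0, 0, 0;
         1 - θ, θ, 0, 0;
         1 - θ, θ, 0, 0;
         1 - μ, 0, μ - θ, θ]
    let AE : Matrix (Fin 4) (Fin 4) ℝ :=
      !![0, 0, 0, 0;
         1, 0, 0, 0;
         1 - θ, θ, 0, 0;
         1 - μ, 0, μ, 0]
    let A : Fin N → Fin N → Matrix (Fin 4) (Fin 4) ℝ :=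
      fun q m => if (m : ℕ) ≤ (q : ℕ) then AI else AE
    let b : Fin 4 → ℝ := ![1 - μ, 0, μ - θ, θ]
    let A00 : Matrix (Fin 2) (Fin 2) ℝ := !![0, 0; 1, 0]
    let A0q : Matrix (Fin 2) (Fin 4) ℝ := !![0, 0, 0, 0; 1 - θ, θ, 0, 0]
    let Aq0 : Matrix (Fin 4) (Fin 2) ℝ := !![0, 0; 1, 0; 1, 0; 1 - μ, μ]
    let b0 : Fin 2 → ℝ := ![1 - μ, μ]
    -- (i) stiff accuracy: for the last partition q = N, each weight vector equals the
    -- last row of the corresponding block (A^{(N,ν)} = AI for ν ≤ N, A^{(N,0)} = Aq0)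
    ((∀ j : Fin 4, b j = AI 3 j) ∧ (∀ j : Fin 2, b0 j = Aq0 3 j)) ∧
    -- (ii) the GARK order conditions through order two hold iff μ = 1/2
    (((b0 ⬝ᵥ (1 : Fin 2 → ℝ) = 1) ∧ (b ⬝ᵥ (1 : Fin 4 → ℝ) = 1) ∧
      (∀ τ ν : Fin N, b ⬝ᵥ (A τ ν).mulVec (1 : Fin 4 → ℝ) = 1/2) ∧
      (∀ τ : Fin N, b ⬝ᵥ Aq0.mulVec (1 : Fin 2 → ℝ) = 1/2) ∧
      (∀ ν : Fin N, b0 ⬝ᵥ A0q.mulVec (1 : Fin 4 → ℝ) = 1/2) ∧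
      (b0 ⬝ᵥ A00.mulVec (1 : Fin 2 → ℝ) = 1/2)) ↔ μ = 1/2) := by
  intro AI AE A b A00 A0q Aq0 b0
  constructor
  · constructor
    · intro j
      fin_cases j <;> simp [b, AI]
    · intro j
      fin_cases j <;> simp [b0, Aq0]
  · constructor
    · rintro ⟨-, -, h, -, -, -⟩
      have τ0 : Fin N := ⟨0, hN⟩
      have := h τ0 τ0
      simp only [A, if_pos (le_refl _)] at this
      simp [dotProduct, mulVec, AI, b, Fin.sum_univ_four,
        Matrix.cons_val_zero, Matrix.cons_val_one] at this
      linarith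
    · intro hμ
      subst hμ
      refine ⟨?_, ?_, ?_, ?_, ?_, ?_⟩
      · simp [dotProduct, b0, Fin.sum_univ_two]
      · simp [dotProduct, b, Fin.sum_univ_four]
      · intro τ ν
        simp only [A]
        by_cases hc : (ν : ℕ) ≤ (τ : ℕ)
        · rw [if_pos hc]; simp [dotProduct, mulVec, AI, b, Fin.sum_univ_four]
        · rw [if_neg hc]; simp [dotProduct, mulVec, AE, b, Fin.sum_univ_four]
      · intro τ
        simp [dotProduct, mulVec, Aq0, b, Fin.sum_univ_four, Fin.sum_univ_two]
      · intro ν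
        simp [dotProduct, mulVec, A0q, b0, Fin.sum_univ_four, Fin.sum_univ_two]
      · simp [dotProduct, mulVec, A00, b0, Fin.sum_univ_two]
end

section
/- Let n ≥ 1 and A ∈ ℝ^{n×n}. Then the following are equivalent: (i) there exists a permutation σ of {1,…,n} such that the permuted matrix à with Ã_{ij} = A_{σ(i)σ(j)} is lower triangular (Ã_{ij} = 0 whenever i < j); (ii) the directed graph on vertices {1,…,n} with an edge i → j whenever i ≠ j and A_{ij} ≠ 0 has no cycles other than loops; equivalently, the relation R defined by R(i,j) ↔ (i ≠ j ∧ A_{ij} ≠ 0) has irreflexive transitive closure. In particular, a GARK scheme with tableau A is implicit-implicit (IMIM) exactly when all cycles of its stage-dependency graph are loops. -/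
/-!
Listing the stages in the order `σ` makes `A` lower triangular means that every edge of the
dependency graph leads from a later stage to an earlier one, so a topological ordering of the
graph with its edges reversed. Such an ordering rules out cycles of length at least two.
Conversely, without such cycles reachability is a partial order; Szpilrajn's theorem extends it
to a linear order, and enumerating the finite vertex set in that order gives `σ`.
-/

open Relation Function

namespace Relation

variable {α : Type*} {r : α → α → Prop}

theorem TransGen.lt_of_forall_lt {β : Type*} [Preorder β] {f : α → β}
    (hf : ∀ a b, r a b → f a < f b) {a b : α} (h : TransGen r a b) : f a < f b := by
  induction h with
  | single hab => exact hf _ _ hab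
  | tail _ hbc ih => exact ih.trans (hf _ _ hbc)

abbrev reachabilityPartialOrder (hr : ∀ a, ¬ TransGen r a a) : PartialOrder α where
  le := ReflTransGen r
  le_refl _ := .refl
  le_trans _ _ _ := ReflTransGen.trans
  le_antisymm a b hab hba := by
    rcases reflTransGen_iff_eq_or_transGen.1 hab with h | hab
    · exact h.symm
    rcases reflTransGen_iff_eq_or_transGen.1 hba with h | hba
    · exact h
    exact (hr a (hab.trans hba)).elim

theorem exists_linearOrder_forall_lt_of_acyclic (hr : ∀ a, ¬ TransGen r a a) :
    ∃ _ : LinearOrder α, ∀ a b, r a b → a < b := by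
  let _ := reachabilityPartialOrder hr
  refine ⟨(inferInstance : LinearOrder (LinearExtension α)), fun a b hab => ?_⟩
  have hle : toLinearExtension a ≤ toLinearExtension b :=
    toLinearExtension.monotone (ReflTransGen.single hab)
  exact lt_of_le_of_ne hle fun h : a = b => hr a (by subst h; exact .single hab)

theorem exists_equiv_fin_forall_lt_iff_acyclic [Fintype α] {n : ℕ} (hn : Fintype.card α = n) :
    (∃ e : Fin n ≃ α, ∀ i j, r (e i) (e j) → i < j) ↔ ∀ a, ¬ TransGen r a a := by
  constructor
  · rintro ⟨e, he⟩ a ha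
    exact lt_irrefl _ <| ha.lt_of_forall_lt (f := e.symm) fun a b hab => he _ _ (by simpa using hab)
  · intro hr
    obtain ⟨_, hlt⟩ := exists_linearOrder_forall_lt_of_acyclic hr
    let e := Fintype.orderIsoFinOfCardEq α hn
    exact ⟨e.toEquiv, fun i j h => e.lt_iff_lt.1 (hlt _ _ h)⟩

end Relation

theorem imim_iff_dependency_graph_loops_only_general (n : ℕ)
    (A : Matrix (Fin n) (Fin n) ℝ) :
    (∃ σ : Equiv.Perm (Fin n), ∀ i j : Fin n, i < j → A (σ i) (σ j) = 0) ↔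
      (∀ i : Fin n,
        ¬ Relation.TransGen (fun i j : Fin n => i ≠ j ∧ A i j ≠ 0) i i) := by
  set R := fun i j : Fin n => i ≠ j ∧ A i j ≠ 0
  have hswap : (∀ i, ¬ TransGen R i i) ↔ ∀ i, ¬ TransGen (swap R) i i :=
    forall_congr' fun i => not_congr transGen_swap.symm
  rw [hswap, ← exists_equiv_fin_forall_lt_iff_acyclic (Fintype.card_fin n)]
  refine exists_congr fun σ => ⟨fun h i j hR => ?_, fun h i j hij => ?_⟩
  · by_contra hji
    exact hR.2 (h j i (lt_of_le_of_ne (not_lt.1 hji) fun e => hR.1 (congrArg σ e)))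
  · by_contra hA
    exact lt_asymm hij (h j i ⟨σ.injective.ne hij.ne, hA⟩)

/-- A matrix can be symmetrically permuted to lower triangular form
(`Ã_{ij} = A_{σ(i)σ(j)} = 0` for `i < j`) if and only if the directed stage-dependency
graph (with an edge `i → j` whenever `i ≠ j` and `A_{ij} ≠ 0`) has no cycles other than
loops; equivalently, the relation `R i j ↔ (i ≠ j ∧ A_{ij} ≠ 0)` has an irreflexive
transitive closure.  This characterizes implicit-implicit (IMIM) GARK schemes. -/
theorem imim_iff_dependency_graph_loops_only (n : ℕ) (hn : 1 ≤ n)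
    (A : Matrix (Fin n) (Fin n) ℝ) :
    (∃ σ : Equiv.Perm (Fin n), ∀ i j : Fin n, i < j → A (σ i) (σ j) = 0) ↔
      (∀ i : Fin n,
        ¬ Relation.TransGen (fun i j : Fin n => i ≠ j ∧ A i j ≠ 0) i i) :=
  imim_iff_dependency_graph_loops_only_general n A
end
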